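/- arXiv:1804.05425 — 4 statements merged into one kernel-verified Lean document; each statement's English description precedes it below -/
import Mathlib

section
/- Let K be a field of characteristic 0 and let A be the K-algebra generated by x, y with relation yx = q₁xy + q₄, where q₁ is a primitive n-th root of unity in K with n ≥ 2. Then xⁿ and yⁿ are central elements of A. -/
/-- The defining relation of the algebra `A = K⟨x,y⟩/(yx - q₁xy - q₄)`. -/
inductive QWeylRel (K : Type*) [Field K] (q₁ q₄ : K) :
    FreeAlgebra K (Fin 2) → FreeAlgebra K (Fin 2) → Prop
  | rel : QWeylRel K q₁ q₄ (FreeAlgebra.ι K 1 * FreeAlgebra.ι K 0)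
      (algebraMap K (FreeAlgebra K (Fin 2)) q₁ * (FreeAlgebra.ι K 0 * FreeAlgebra.ι K 1) +
        algebraMap K (FreeAlgebra K (Fin 2)) q₄)

/-- The algebra `A = K⟨x,y⟩/(yx - q₁xy - q₄)`. -/
abbrev QWeyl (K : Type*) [Field K] (q₁ q₄ : K) := RingQuot (QWeylRel K q₁ q₄)

noncomputable def QWeyl.x (K : Type*) [Field K] (q₁ q₄ : K) : QWeyl K q₁ q₄ :=
  RingQuot.mkAlgHom K (QWeylRel K q₁ q₄) (FreeAlgebra.ι K 0)

noncomputable def QWeyl.y (K : Type*) [Field K] (q₁ q₄ : K) : QWeyl K q₁ q₄ :=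
  RingQuot.mkAlgHom K (QWeylRel K q₁ q₄) (FreeAlgebra.ι K 1)

/-!
From `y x = q x y + c` one gets by induction
`y xᵏ⁺¹ = qᵏ⁺¹ xᵏ⁺¹ y + c (1 + q + ⋯ + qᵏ) xᵏ`. For a primitive `n`-th root of unity `q` with
`n ≥ 2` we have `qⁿ = 1` and `1 + q + ⋯ + qⁿ⁻¹ = 0`, so `y` commutes with `xⁿ`. In the opposite
algebra the same relation holds with `x` and `y` exchanged, so `x` commutes with `yⁿ`. As `x` and
`y` generate the algebra, `xⁿ` and `yⁿ` are central.
-/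

open Finset

section QCommutation

variable {K A : Type*} [CommSemiring K] [Semiring A] [Algebra K A] {x y : A} {q c : K}

theorem mul_pow_succ_eq_of_mul_eq (h : y * x = q • (x * y) + algebraMap K A c) (k : ℕ) :
    y * x ^ (k + 1) =
      q ^ (k + 1) • (x ^ (k + 1) * y) + (c * ∑ i ∈ range (k + 1), q ^ i) • x ^ k := by
  induction k with
  | zero => simpa [Algebra.algebraMap_eq_smul_one] using h
  | succ k ih =>
    rw [pow_succ x (k + 1), ← mul_assoc, ih, add_mul, smul_mul_assoc, mul_assoc, h,
      sum_range_succ _ (k + 1), smul_mul_assoc, ← pow_succ]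
    simp only [mul_add, smul_add, mul_smul_comm, smul_smul, Algebra.algebraMap_eq_smul_one,
      mul_one, ← mul_assoc, ← pow_succ]
    module

theorem commute_pow_of_mul_eq (h : y * x = q • (x * y) + algebraMap K A c) {n : ℕ}
    (hq : q ^ n = 1) (hsum : ∑ i ∈ range n, q ^ i = 0) : Commute y (x ^ n) := by
  obtain _ | k := n
  · exact (pow_zero x).symm ▸ Commute.one_right y
  · rw [Commute, SemiconjBy, mul_pow_succ_eq_of_mul_eq h, hq, hsum]
    simp

theorem pow_commute_of_mul_eq (h : y * x = q • (x * y) + algebraMap K A c) {n : ℕ}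
    (hq : q ^ n = 1) (hsum : ∑ i ∈ range n, q ^ i = 0) : Commute (y ^ n) x := by
  have h' : MulOpposite.op x * MulOpposite.op y =
      q • (MulOpposite.op y * MulOpposite.op x) + algebraMap K Aᵐᵒᵖ c := by
    rw [← MulOpposite.op_mul, h]
    simp
  simpa using (commute_pow_of_mul_eq h' hq hsum).unop.symm

end QCommutation

namespace QWeyl

variable {K : Type*} [Field K] {q₁ q₄ : K}

theorem y_mul_x : y K q₁ q₄ * x K q₁ q₄ = q₁ • (x K q₁ q₄ * y K q₁ q₄) + algebraMap K _ q₄ := by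
  have h := RingQuot.mkAlgHom_rel K (QWeylRel.rel (K := K) (q₁ := q₁) (q₄ := q₄))
  simp only [map_mul, map_add, AlgHom.commutes] at h
  rw [x, y, h, Algebra.smul_def]

theorem adjoin_x_y : Algebra.adjoin K {x K q₁ q₄, y K q₁ q₄} = ⊤ := by
  have hgen : {x K q₁ q₄, y K q₁ q₄} =
      RingQuot.mkAlgHom K (QWeylRel K q₁ q₄) '' Set.range (FreeAlgebra.ι K) := by
    ext a
    simp [Fin.exists_fin_two, x, y, eq_comm]
  rw [hgen, Algebra.adjoin_image, FreeAlgebra.adjoin_range_ι, Algebra.map_top,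
    AlgHom.range_eq_top]
  exact RingQuot.mkAlgHom_surjective K _

theorem mem_center_of_commute {z : QWeyl K q₁ q₄} (hx : Commute z (x K q₁ q₄))
    (hy : Commute z (y K q₁ q₄)) : z ∈ Subalgebra.center K (QWeyl K q₁ q₄) := by
  rw [Subalgebra.mem_center_iff]
  intro a
  have ha : a ∈ Algebra.adjoin K {x K q₁ q₄, y K q₁ q₄} := by
    rw [adjoin_x_y]
    exact Algebra.mem_top
  refine (Algebra.commute_of_mem_adjoin_of_forall_mem_commute ha ?_).symm
  rintro b (rfl | rfl)
  exacts [hx, hy]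

end QWeyl

theorem stmt1_general (K : Type*) [Field K] (q₁ q₄ : K) (n : ℕ) (hn : 2 ≤ n)
    (hq₁ : IsPrimitiveRoot q₁ n) :
    QWeyl.x K q₁ q₄ ^ n ∈ Subalgebra.center K (QWeyl K q₁ q₄) ∧
    QWeyl.y K q₁ q₄ ^ n ∈ Subalgebra.center K (QWeyl K q₁ q₄) := by
  have hsum := hq₁.geom_sum_eq_zero (by omega)
  refine ⟨QWeyl.mem_center_of_commute ?_ ?_, QWeyl.mem_center_of_commute ?_ ?_⟩
  · exact (Commute.refl _).pow_left n
  · exact (commute_pow_of_mul_eq QWeyl.y_mul_x hq₁.pow_eq_one hsum).symm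
  · exact pow_commute_of_mul_eq QWeyl.y_mul_x hq₁.pow_eq_one hsum
  · exact (Commute.refl _).pow_left n

theorem stmt1 (K : Type*) [Field K] [CharZero K] (q₁ q₄ : K) (n : ℕ) (hn : 2 ≤ n)
    (hq₁ : IsPrimitiveRoot q₁ n) :
    QWeyl.x K q₁ q₄ ^ n ∈ Subalgebra.center K (QWeyl K q₁ q₄) ∧
    QWeyl.y K q₁ q₄ ^ n ∈ Subalgebra.center K (QWeyl K q₁ q₄) :=
  stmt1_general K q₁ q₄ n hn hq₁
end

section
/- Let K be a field of characteristic 0 and D the Dispin algebra with relations yx = xy - x, zx = -xz + y, zy = yz - z. Then the element f = 4x²z² - y² - 2xz - y is central in D. -/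
inductive DispinRel (K : Type*) [Field K] :
    FreeAlgebra K (Fin 3) → FreeAlgebra K (Fin 3) → Prop
  | relyx : DispinRel K (FreeAlgebra.ι K 1 * FreeAlgebra.ι K 0)
      (FreeAlgebra.ι K 0 * FreeAlgebra.ι K 1 - FreeAlgebra.ι K 0)
  | relzx : DispinRel K (FreeAlgebra.ι K 2 * FreeAlgebra.ι K 0)
      (-(FreeAlgebra.ι K 0 * FreeAlgebra.ι K 2) + FreeAlgebra.ι K 1)
  | relzy : DispinRel K (FreeAlgebra.ι K 2 * FreeAlgebra.ι K 1)
      (FreeAlgebra.ι K 1 * FreeAlgebra.ι K 2 - FreeAlgebra.ι K 2)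

abbrev Dispin (K : Type*) [Field K] := RingQuot (DispinRel K)

noncomputable def Dispin.x (K : Type*) [Field K] : Dispin K :=
  RingQuot.mkAlgHom K (DispinRel K) (FreeAlgebra.ι K 0)

noncomputable def Dispin.y (K : Type*) [Field K] : Dispin K :=
  RingQuot.mkAlgHom K (DispinRel K) (FreeAlgebra.ι K 1)

noncomputable def Dispin.z (K : Type*) [Field K] : Dispin K :=
  RingQuot.mkAlgHom K (DispinRel K) (FreeAlgebra.ι K 2)

section
variable (K : Type*) [Field K]

lemma hyx : Dispin.y K * Dispin.x K = Dispin.x K * Dispin.y K - Dispin.x K := by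
  have := RingQuot.mkAlgHom_rel K (DispinRel.relyx (K := K))
  simpa [map_mul, map_sub, Dispin.x, Dispin.y] using this

lemma hzx : Dispin.z K * Dispin.x K = Dispin.y K - Dispin.x K * Dispin.z K := by
  have := RingQuot.mkAlgHom_rel K (DispinRel.relzx (K := K))
  simp only [map_mul, map_add, map_neg] at this
  rw [neg_add_eq_sub] at this
  exact this

lemma hzy : Dispin.z K * Dispin.y K = Dispin.y K * Dispin.z K - Dispin.z K := by
  have := RingQuot.mkAlgHom_rel K (DispinRel.relzy (K := K))
  simpa [map_mul, map_sub, Dispin.y, Dispin.z] using this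

lemma hyx' (c : Dispin K) : Dispin.y K * (Dispin.x K * c) =
    Dispin.x K * (Dispin.y K * c) - Dispin.x K * c := by
  rw [← mul_assoc, hyx, sub_mul, mul_assoc]

lemma hzx' (c : Dispin K) : Dispin.z K * (Dispin.x K * c) =
    Dispin.y K * c - Dispin.x K * (Dispin.z K * c) := by
  rw [← mul_assoc, hzx, sub_mul, mul_assoc]

lemma hzy' (c : Dispin K) : Dispin.z K * (Dispin.y K * c) =
    Dispin.y K * (Dispin.z K * c) - Dispin.z K * c := by
  rw [← mul_assoc, hzy, sub_mul, mul_assoc]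

lemma h4 (a b : Dispin K) : a * (4 * b) = 4 * (a * b) := by
  rw [← mul_assoc, ← mul_assoc, (Commute.ofNat_right a 4).eq]

lemma h2 (a b : Dispin K) : a * (2 * b) = 2 * (a * b) := by
  rw [← mul_assoc, ← mul_assoc, (Commute.ofNat_right a 2).eq]

noncomputable def Dispin.f : Dispin K :=
  4 * (Dispin.x K ^ 2 * Dispin.z K ^ 2) - Dispin.y K ^ 2 -
    2 * (Dispin.x K * Dispin.z K) - Dispin.y K

lemma commX : Dispin.f K * Dispin.x K = Dispin.x K * Dispin.f K := by
  simp only [Dispin.f, pow_two, mul_assoc, h4, h2,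
    hyx, hzx, hzy, hyx', hzx', hzy', mul_sub, sub_mul, mul_add, add_mul]
  noncomm_ring

lemma commY : Dispin.f K * Dispin.y K = Dispin.y K * Dispin.f K := by
  simp only [Dispin.f, pow_two, mul_assoc, h4, h2,
    hyx, hzx, hzy, hyx', hzx', hzy', mul_sub, sub_mul, mul_add, add_mul]

lemma commZ : Dispin.f K * Dispin.z K = Dispin.z K * Dispin.f K := by
  simp only [Dispin.f, pow_two, mul_assoc, h4, h2,
    hyx, hzx, hzy, hyx', hzx', hzy', mul_sub, sub_mul, mul_add, add_mul]
  noncomm_ring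

end

theorem stmt11 (K : Type*) [Field K] [CharZero K] :
    4 * (Dispin.x K ^ 2 * Dispin.z K ^ 2) - Dispin.y K ^ 2 -
        2 * (Dispin.x K * Dispin.z K) - Dispin.y K ∈
      Subalgebra.center K (Dispin K) := by
  rw [Subalgebra.mem_center_iff]
  have hf : 4 * (Dispin.x K ^ 2 * Dispin.z K ^ 2) - Dispin.y K ^ 2 -
      2 * (Dispin.x K * Dispin.z K) - Dispin.y K = Dispin.f K := rfl
  rw [hf]
  intro g
  obtain ⟨b, rfl⟩ := RingQuot.mkAlgHom_surjective K (DispinRel K) g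
  induction b using FreeAlgebra.induction with
  | grade0 r =>
    rw [AlgHom.commutes]
    exact Algebra.commutes r _
  | grade1 i =>
    fin_cases i
    · exact (commX K).symm
    · exact (commY K).symm
    · exact (commZ K).symm
  | mul a b ha hb => rw [map_mul, mul_assoc, hb, ← mul_assoc, ha, mul_assoc]
  | add a b ha hb => rw [map_add, mul_add, add_mul, ha, hb]
end

section
/- Let K be a field of characteristic 0 and D the Dispin algebra with relations yx = xy - x, zx = -xz + y, zy = yz - z. Then for all l ≥ 1: z^{2l}·x = x·z^{2l} - l·z^{2l-1}. -/
theorem stmt12 (K : Type*) [Field K] [CharZero K] (l : ℕ) (hl : 1 ≤ l) :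
    Dispin.z K ^ (2 * l) * Dispin.x K =
      Dispin.x K * Dispin.z K ^ (2 * l) -
        algebraMap K (Dispin K) (l : K) * Dispin.z K ^ (2 * l - 1) := by
  have hzx : Dispin.z K * Dispin.x K = -(Dispin.x K * Dispin.z K) + Dispin.y K := by
    unfold Dispin.x Dispin.y Dispin.z
    rw [← map_mul, RingQuot.mkAlgHom_rel K DispinRel.relzx, map_add, map_neg, map_mul]
  have hzy : Dispin.z K * Dispin.y K = Dispin.y K * Dispin.z K - Dispin.z K := by
    unfold Dispin.y Dispin.z
    rw [← map_mul, RingQuot.mkAlgHom_rel K DispinRel.relzy, map_sub, map_mul]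
  have h2 : Dispin.z K ^ 2 * Dispin.x K =
      Dispin.x K * Dispin.z K ^ 2 - Dispin.z K := by
    calc Dispin.z K ^ 2 * Dispin.x K
        = Dispin.z K * (Dispin.z K * Dispin.x K) := by rw [pow_two, mul_assoc]
      _ = Dispin.z K * (-(Dispin.x K * Dispin.z K) + Dispin.y K) := by rw [hzx]
      _ = -(Dispin.z K * Dispin.x K * Dispin.z K) + Dispin.z K * Dispin.y K := by
          noncomm_ring
          simp only [mul_smul_comm, smul_mul_assoc, smul_smul, mul_assoc]
          abel
      _ = -((-(Dispin.x K * Dispin.z K) + Dispin.y K) * Dispin.z K) +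
            (Dispin.y K * Dispin.z K - Dispin.z K) := by rw [hzx, hzy]
      _ = Dispin.x K * Dispin.z K ^ 2 - Dispin.z K := by
          noncomm_ring
          simp only [mul_smul_comm, smul_mul_assoc, smul_smul, mul_assoc]
          abel
  induction l, hl using Nat.le_induction with
  | base =>
      simpa using h2
  | succ l hl ih =>
      have e1 : 2 * (l + 1) = 2 + 2 * l := by ring
      have e2 : 2 + 2 * l - 1 = 2 + (2 * l - 1) := by omega
      have hcast : ((l + 1 : ℕ) : K) = (l : K) + 1 := by push_cast; ring
      rw [e1, e2, pow_add, pow_add, mul_assoc, ih, hcast, map_add, map_one]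
      set c : Dispin K := algebraMap K (Dispin K) (l : K) with hcdef
      have hc : ∀ a : Dispin K, c * a = a * c := fun a => Algebra.commutes _ _
      have hz2 : Dispin.z K * Dispin.z K ^ (2 * l)
          = Dispin.z K ^ 2 * Dispin.z K ^ (2 * l - 1) := by
        rw [← pow_succ', ← pow_add]
        congr 1
        omega
      calc Dispin.z K ^ 2 * (Dispin.x K * Dispin.z K ^ (2 * l)
            - c * Dispin.z K ^ (2 * l - 1))
          = (Dispin.z K ^ 2 * Dispin.x K) * Dispin.z K ^ (2 * l)
            - c * (Dispin.z K ^ 2 * Dispin.z K ^ (2 * l - 1)) := by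
            rw [mul_sub, ← mul_assoc, ← mul_assoc, ← hc, mul_assoc, mul_assoc]
        _ = (Dispin.x K * Dispin.z K ^ 2 - Dispin.z K) * Dispin.z K ^ (2 * l)
            - c * (Dispin.z K ^ 2 * Dispin.z K ^ (2 * l - 1)) := by rw [h2]
        _ = Dispin.x K * (Dispin.z K ^ 2 * Dispin.z K ^ (2 * l))
            - (c + 1) * (Dispin.z K ^ 2 * Dispin.z K ^ (2 * l - 1)) := by
            rw [sub_mul, add_mul, one_mul, mul_assoc, hz2, sub_sub, add_comm]
end

section
/- Let K be a field of characteristic 0 and A = O_q(M_2(K)) with relations as above, where q is a root of unity of degree l ≥ 3. Then x^l and y^l are central elements, and for all i, j ≥ 0 with i + j = l the element u^i·v^j is central. -/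
/-- The defining relations of the coordinate algebra `O_q(M_2(K))` of quantum 2×2 matrices,
generated by `x, y, u, v` with `xu = qux`, `yu = q⁻¹uy`, `vu = uv`, `xv = qvx`, `vy = qyv`,
`yx = xy - (q - q⁻¹)uv`. -/
inductive QMatRel (K : Type*) [Field K] (q : K) :
    FreeAlgebra K (Fin 4) → FreeAlgebra K (Fin 4) → Prop
  | relxu : QMatRel K q (FreeAlgebra.ι K 0 * FreeAlgebra.ι K 2)
      (algebraMap K (FreeAlgebra K (Fin 4)) q * (FreeAlgebra.ι K 2 * FreeAlgebra.ι K 0))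
  | relyu : QMatRel K q (FreeAlgebra.ι K 1 * FreeAlgebra.ι K 2)
      (algebraMap K (FreeAlgebra K (Fin 4)) q⁻¹ * (FreeAlgebra.ι K 2 * FreeAlgebra.ι K 1))
  | relvu : QMatRel K q (FreeAlgebra.ι K 3 * FreeAlgebra.ι K 2)
      (FreeAlgebra.ι K 2 * FreeAlgebra.ι K 3)
  | relxv : QMatRel K q (FreeAlgebra.ι K 0 * FreeAlgebra.ι K 3)
      (algebraMap K (FreeAlgebra K (Fin 4)) q * (FreeAlgebra.ι K 3 * FreeAlgebra.ι K 0))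
  | relvy : QMatRel K q (FreeAlgebra.ι K 3 * FreeAlgebra.ι K 1)
      (algebraMap K (FreeAlgebra K (Fin 4)) q * (FreeAlgebra.ι K 1 * FreeAlgebra.ι K 3))
  | relyx : QMatRel K q (FreeAlgebra.ι K 1 * FreeAlgebra.ι K 0)
      (FreeAlgebra.ι K 0 * FreeAlgebra.ι K 1 -
        algebraMap K (FreeAlgebra K (Fin 4)) (q - q⁻¹) * (FreeAlgebra.ι K 2 * FreeAlgebra.ι K 3))

/-- The coordinate algebra of quantum 2×2 matrices. -/
abbrev QMat (K : Type*) [Field K] (q : K) := RingQuot (QMatRel K q)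

noncomputable def QMat.x (K : Type*) [Field K] (q : K) : QMat K q :=
  RingQuot.mkAlgHom K (QMatRel K q) (FreeAlgebra.ι K 0)

noncomputable def QMat.y (K : Type*) [Field K] (q : K) : QMat K q :=
  RingQuot.mkAlgHom K (QMatRel K q) (FreeAlgebra.ι K 1)

noncomputable def QMat.u (K : Type*) [Field K] (q : K) : QMat K q :=
  RingQuot.mkAlgHom K (QMatRel K q) (FreeAlgebra.ι K 2)

noncomputable def QMat.v (K : Type*) [Field K] (q : K) : QMat K q :=
  RingQuot.mkAlgHom K (QMatRel K q) (FreeAlgebra.ι K 3)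

/-! `x` and `y` `q`-commute with `u` and `v`, so `x ^ l` and `y ^ l` commute with `u` and `v` once
`q ^ l = 1`, and likewise `u ^ i * v ^ j` commutes with `x` and `y` once `q ^ (i + j) = 1`. The only
non-homogeneous relation is `y x = x y - (q - q⁻¹) u v`; pushing `y` through `x ^ n` produces the
error term `(q - q⁻¹) [n]_{q²} u v x ^ (n - 1)`, and `(q - q⁻¹) [l]_{q²} = q⁻¹ (q ^ (2 l) - 1) = 0`. -/

open Finset

def QCommute {R A : Type*} [CommSemiring R] [Semiring A] [Algebra R A] (c : R) (a b : A) : Prop :=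
  a * b = c • (b * a)

namespace QCommute

variable {R A : Type*} [CommSemiring R] [Semiring A] [Algebra R A] {a b d : A} {c s : R}

theorem pow_left (h : QCommute c a b) : ∀ n : ℕ, QCommute (c ^ n) (a ^ n) b
  | 0 => by simp [QCommute]
  | n + 1 => by
    rw [QCommute, pow_succ, mul_assoc, h, mul_smul_comm, ← mul_assoc, h.pow_left n,
      smul_mul_assoc, smul_smul, mul_assoc, ← pow_succ, ← pow_succ']

theorem pow_right (h : QCommute c a b) : ∀ n : ℕ, QCommute (c ^ n) a (b ^ n)
  | 0 => by simp [QCommute]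
  | n + 1 => by
    rw [QCommute, pow_succ', ← mul_assoc, h, smul_mul_assoc, mul_assoc, h.pow_right n,
      mul_smul_comm, smul_smul, ← mul_assoc, ← pow_succ', ← pow_succ']

theorem mul_left (h₁ : QCommute c a d) (h₂ : QCommute s b d) : QCommute (c * s) (a * b) d := by
  rw [QCommute, mul_assoc, h₂, mul_smul_comm, ← mul_assoc, h₁, smul_mul_assoc, smul_smul,
    mul_assoc, mul_comm s c]

theorem mul_right (h₁ : QCommute c a b) (h₂ : QCommute s a d) : QCommute (c * s) a (b * d) := by
  rw [QCommute, ← mul_assoc, h₁, smul_mul_assoc, mul_assoc, h₂, mul_smul_comm, smul_smul,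
    ← mul_assoc]

theorem symm {c' : R} (h : QCommute c a b) (hc : c' * c = 1) : QCommute c' b a := by
  rw [QCommute, h, smul_smul, hc, one_smul]

theorem commute (h : QCommute c a b) (hc : c = 1) : Commute a b := by
  rw [Commute, SemiconjBy, h, hc, one_smul]

end QCommute

section TwistedCommutator

variable {R A : Type*} [CommSemiring R] [Semiring A] [Algebra R A]

theorem mul_pow_succ_of_mul_eq_add_smul {a b w : A} {c p : R}
    (hba : b * a = a * b + c • w) (haw : QCommute p a w) :
    ∀ n : ℕ, b * a ^ (n + 1) = a ^ (n + 1) * b + (c * ∑ k ∈ range (n + 1), p ^ k) • (w * a ^ n)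
  | 0 => by simpa using hba
  | n + 1 => by
    have hpow : a ^ (n + 1) * w = p ^ (n + 1) • (w * a ^ (n + 1)) := haw.pow_left (n + 1)
    calc b * a ^ (n + 1 + 1)
        = a ^ (n + 1) * (b * a) + (c * ∑ k ∈ range (n + 1), p ^ k) • (w * a ^ (n + 1)) := by
          rw [pow_succ a (n + 1), ← mul_assoc, mul_pow_succ_of_mul_eq_add_smul hba haw n,
            add_mul, smul_mul_assoc, mul_assoc, mul_assoc, ← pow_succ]
      _ = a ^ (n + 1 + 1) * b + (c * ∑ k ∈ range (n + 1 + 1), p ^ k) • (w * a ^ (n + 1)) := by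
          rw [hba, mul_add, ← mul_assoc, ← pow_succ, mul_smul_comm, hpow, smul_smul,
            add_assoc, ← add_smul, sum_range_succ _ (n + 1), mul_add, add_comm (c * p ^ (n + 1))]

theorem commute_pow_of_mul_eq_add_smul {a b w : A} {c p : R}
    (hba : b * a = a * b + c • w) (haw : QCommute p a w) {n : ℕ}
    (hn : c * ∑ k ∈ range n, p ^ k = 0) : Commute b (a ^ n) := by
  cases n with
  | zero => simp
  | succ n =>
    rw [Commute, SemiconjBy, mul_pow_succ_of_mul_eq_add_smul hba haw n, hn, zero_smul, add_zero]

end TwistedCommutator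

theorem sub_inv_mul_geom_sum_sq_eq_zero {K : Type*} [Field K] {r : K} {l : ℕ} (hr : r ≠ 0)
    (hrl : r ^ l = 1) : (r - r⁻¹) * ∑ k ∈ range l, (r ^ 2) ^ k = 0 := by
  have hfactor : r - r⁻¹ = r⁻¹ * (r ^ 2 - 1) := by field_simp
  rw [hfactor, mul_assoc, mul_geom_sum, ← pow_mul, mul_comm 2 l, pow_mul, hrl, one_pow, sub_self,
    mul_zero]

namespace QMat

variable {K : Type*} [Field K] {q : K}

theorem qcommute_x_u : QCommute q (x K q) (u K q) := by
  simpa [QCommute, x, u, Algebra.smul_def] using RingQuot.mkAlgHom_rel K (QMatRel.relxu (q := q))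

theorem qcommute_y_u : QCommute q⁻¹ (y K q) (u K q) := by
  simpa [QCommute, y, u, Algebra.smul_def] using RingQuot.mkAlgHom_rel K (QMatRel.relyu (q := q))

theorem commute_u_v : Commute (u K q) (v K q) := by
  simpa [Commute, SemiconjBy, v, u] using (RingQuot.mkAlgHom_rel K (QMatRel.relvu (q := q))).symm

theorem qcommute_x_v : QCommute q (x K q) (v K q) := by
  simpa [QCommute, x, v, Algebra.smul_def] using RingQuot.mkAlgHom_rel K (QMatRel.relxv (q := q))

theorem qcommute_v_y : QCommute q (v K q) (y K q) := by
  simpa [QCommute, v, y, Algebra.smul_def] using RingQuot.mkAlgHom_rel K (QMatRel.relvy (q := q))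

theorem y_mul_x : y K q * x K q = x K q * y K q - (q - q⁻¹) • (u K q * v K q) := by
  simpa [x, y, u, v, Algebra.smul_def] using RingQuot.mkAlgHom_rel K (QMatRel.relyx (q := q))

theorem mem_center_of_commute {z : QMat K q} (hx : Commute (x K q) z) (hy : Commute (y K q) z)
    (hu : Commute (u K q) z) (hv : Commute (v K q) z) : z ∈ Subalgebra.center K (QMat K q) := by
  rw [Subalgebra.mem_center_iff]
  intro b
  obtain ⟨f, rfl⟩ := RingQuot.mkAlgHom_surjective K (QMatRel K q) b
  induction f using FreeAlgebra.induction with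
  | grade0 r => simp [Algebra.commutes]
  | grade1 i =>
    fin_cases i
    · exact hx
    · exact hy
    · exact hu
    · exact hv
  | mul f g hf hg => rw [map_mul, mul_assoc, hg, ← mul_assoc, hf, mul_assoc]
  | add f g hf hg => rw [map_add, add_mul, mul_add, hf, hg]

theorem x_pow_mem_center {l : ℕ} (hq0 : q ≠ 0) (hql : q ^ l = 1) :
    x K q ^ l ∈ Subalgebra.center K (QMat K q) := by
  have hyx : y K q * x K q = x K q * y K q + (-(q - q⁻¹)) • (u K q * v K q) := by
    rw [y_mul_x]; module
  have hcoeff : -(q - q⁻¹) * ∑ k ∈ range l, (q ^ 2) ^ k = 0 := by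
    rw [neg_mul, sub_inv_mul_geom_sum_sq_eq_zero hq0 hql, neg_zero]
  have hxw : QCommute (q ^ 2) (x K q) (u K q * v K q) :=
    sq q ▸ qcommute_x_u.mul_right qcommute_x_v
  refine mem_center_of_commute (.self_pow _ _) ?_ ?_ ?_
  · exact commute_pow_of_mul_eq_add_smul hyx hxw hcoeff
  · exact (qcommute_x_u.pow_left l).commute hql |>.symm
  · exact (qcommute_x_v.pow_left l).commute hql |>.symm

theorem y_pow_mem_center {l : ℕ} (hq0 : q ≠ 0) (hql : q ^ l = 1) :
    y K q ^ l ∈ Subalgebra.center K (QMat K q) := by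
  have hqil : q⁻¹ ^ l = 1 := by rw [inv_pow, hql, inv_one]
  have hxy : x K q * y K q = y K q * x K q + (q - q⁻¹) • (u K q * v K q) := by
    rw [y_mul_x, sub_add_cancel]
  have hyv : QCommute q⁻¹ (y K q) (v K q) := qcommute_v_y.symm (inv_mul_cancel₀ hq0)
  have hcoeff : (q - q⁻¹) * ∑ k ∈ range l, (q⁻¹ ^ 2) ^ k = 0 := by
    rw [← neg_sub, ← inv_inv q, inv_inv q⁻¹, neg_mul,
      sub_inv_mul_geom_sum_sq_eq_zero (inv_ne_zero hq0) hqil, neg_zero]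
  have hyw : QCommute (q⁻¹ ^ 2) (y K q) (u K q * v K q) :=
    sq q⁻¹ ▸ qcommute_y_u.mul_right hyv
  refine mem_center_of_commute ?_ (.self_pow _ _) ?_ ?_
  · exact commute_pow_of_mul_eq_add_smul hxy hyw hcoeff
  · exact (qcommute_y_u.pow_left l).commute hqil |>.symm
  · exact (qcommute_v_y.pow_right l).commute hql

theorem u_pow_mul_v_pow_mem_center {i j : ℕ} (hq0 : q ≠ 0) (hqij : q ^ (i + j) = 1) :
    u K q ^ i * v K q ^ j ∈ Subalgebra.center K (QMat K q) := by
  have huy : QCommute q (u K q) (y K q) := qcommute_y_u.symm (mul_inv_cancel₀ hq0)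
  refine mem_center_of_commute ?_ ?_ ?_ ?_
  · exact ((qcommute_x_u.pow_right i).mul_right (qcommute_x_v.pow_right j)).commute
      (by rw [← pow_add, hqij])
  · exact (((huy.pow_left i).mul_left (qcommute_v_y.pow_left j)).commute
      (by rw [← pow_add, hqij])).symm
  · exact (Commute.self_pow _ i).mul_right (commute_u_v.pow_right j)
  · exact (commute_u_v.symm.pow_right i).mul_right (Commute.self_pow _ j)

end QMat

theorem stmt16_general (K : Type*) [Field K] (q : K) (l : ℕ) (hl : 3 ≤ l)
    (hq : IsPrimitiveRoot q l) :
    QMat.x K q ^ l ∈ Subalgebra.center K (QMat K q) ∧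
    QMat.y K q ^ l ∈ Subalgebra.center K (QMat K q) ∧
    ∀ i j : ℕ, i + j = l → QMat.u K q ^ i * QMat.v K q ^ j ∈ Subalgebra.center K (QMat K q) := by
  have hq0 : q ≠ 0 := hq.ne_zero (by omega)
  exact ⟨QMat.x_pow_mem_center hq0 hq.pow_eq_one, QMat.y_pow_mem_center hq0 hq.pow_eq_one,
    fun i j hij => QMat.u_pow_mul_v_pow_mem_center hq0 (hij ▸ hq.pow_eq_one)⟩

theorem stmt16 (K : Type*) [Field K] [CharZero K] (q : K) (l : ℕ) (hl : 3 ≤ l)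
    (hq : IsPrimitiveRoot q l) :
    QMat.x K q ^ l ∈ Subalgebra.center K (QMat K q) ∧
    QMat.y K q ^ l ∈ Subalgebra.center K (QMat K q) ∧
    ∀ i j : ℕ, i + j = l → QMat.u K q ^ i * QMat.v K q ^ j ∈ Subalgebra.center K (QMat K q) :=
  stmt16_general K q l hl hq
end
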